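/- arXiv:2512.00951 — 2 statements merged into one kernel-verified Lean document; each statement's English description precedes it below -/
import Mathlib

section
/- Let A be a 2×2 real symmetric matrix with λ|ξ|² ≤ ξᵀAξ ≤ Λ|ξ|² for all ξ ∈ ℝ², 0 < λ ≤ Λ. Set ã = a₁₁/a₂₂, b̃ = 2a₁₂/a₂₂, and let Ãˢ = (ã, b̃/2; b̃/2, 1) be the symmetric part of Ã. Then with θ = λ³/(Λ²(Λ+λ)) and Θ = Λ²(Λ+λ)/λ³ one has θ·I₂ ≤ Ãˢ ≤ Θ·I₂ in the sense of quadratic forms. -/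
/-!
Testing the ellipticity of `A` on `ξ = (0, 1)` gives `λ ≤ a₂₂ ≤ Λ`, and the form of `Ãˢ` is the
form of `A` divided by `a₂₂`. Hence `Ãˢ` is elliptic with constants `λ/Λ` and `Λ/λ`, which are
sharper than `θ` and `Θ` because `λ² ≤ Λ(Λ + λ)`.
-/

theorem div_mem_Icc_div_mul {m M c q s : ℝ} (hm : 0 < m) (hs : 0 ≤ s)
    (hc : c ∈ Set.Icc m M) (hq : q ∈ Set.Icc (m * s) (M * s)) :
    q / c ∈ Set.Icc (m / M * s) (M / m * s) := by
  have hc₀ : 0 < c := hm.trans_le hc.1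
  constructor
  · calc m / M * s ≤ m / c * s := by gcongr; exact hc.2
      _ = m * s / c := by ring
      _ ≤ q / c := by gcongr; exact hq.1
  · calc q / c ≤ M * s / c := by gcongr; exact hq.2
      _ = M / c * s := by ring
      _ ≤ M / m * s := by gcongr; exacts [(hm.trans_le (hc.1.trans hc.2)).le, hc.1]

theorem pow_three_div_sq_mul_add_le_div {m M : ℝ} (hm : 0 < m) (hmM : m ≤ M) :
    m ^ 3 / (M ^ 2 * (M + m)) ≤ m / M := by
  have hM : 0 < M := hm.trans_le hmM
  rw [div_le_div_iff₀ (by positivity) hM]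
  nlinarith [mul_pos hm hM, mul_le_mul_of_nonneg_left hmM (mul_pos hm hM).le]

theorem div_le_sq_mul_add_div_pow_three {m M : ℝ} (hm : 0 < m) (hmM : m ≤ M) :
    M / m ≤ M ^ 2 * (M + m) / m ^ 3 := by
  have hM : 0 < M := hm.trans_le hmM
  rw [div_le_div_iff₀ hm (by positivity)]
  nlinarith [mul_pos hm hM, mul_le_mul_of_nonneg_left hmM (mul_pos hm hM).le]

theorem symmetric_part_ellipticity_general (lam Lam a11 a12 a22 : ℝ)
    (hlam : 0 < lam)
    (hell : ∀ ξ : ℝ × ℝ,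
      lam * (ξ.1 ^ 2 + ξ.2 ^ 2) ≤ a11 * ξ.1 ^ 2 + 2 * a12 * ξ.1 * ξ.2 + a22 * ξ.2 ^ 2 ∧
      a11 * ξ.1 ^ 2 + 2 * a12 * ξ.1 * ξ.2 + a22 * ξ.2 ^ 2 ≤ Lam * (ξ.1 ^ 2 + ξ.2 ^ 2)) :
    ∀ ξ : ℝ × ℝ,
      lam ^ 3 / (Lam ^ 2 * (Lam + lam)) * (ξ.1 ^ 2 + ξ.2 ^ 2) ≤
        a11 / a22 * ξ.1 ^ 2 + 2 * a12 / a22 * ξ.1 * ξ.2 + ξ.2 ^ 2 ∧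
      a11 / a22 * ξ.1 ^ 2 + 2 * a12 / a22 * ξ.1 * ξ.2 + ξ.2 ^ 2 ≤
        Lam ^ 2 * (Lam + lam) / lam ^ 3 * (ξ.1 ^ 2 + ξ.2 ^ 2) := by
  intro ξ
  have ha22 : a22 ∈ Set.Icc lam Lam := by simpa using hell (0, 1)
  have hlL : lam ≤ Lam := ha22.1.trans ha22.2
  have hform : a11 / a22 * ξ.1 ^ 2 + 2 * a12 / a22 * ξ.1 * ξ.2 + ξ.2 ^ 2 =
      (a11 * ξ.1 ^ 2 + 2 * a12 * ξ.1 * ξ.2 + a22 * ξ.2 ^ 2) / a22 := by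
    field_simp [(hlam.trans_le ha22.1).ne']
  have hs : 0 ≤ ξ.1 ^ 2 + ξ.2 ^ 2 := by positivity
  obtain ⟨hlower, hupper⟩ := div_mem_Icc_div_mul hlam hs ha22 (hell ξ)
  rw [hform]
  exact ⟨(mul_le_mul_of_nonneg_right (pow_three_div_sq_mul_add_le_div hlam hlL) hs).trans hlower,
    hupper.trans (mul_le_mul_of_nonneg_right (div_le_sq_mul_add_div_pow_three hlam hlL) hs)⟩

/-- With `ã = a₁₁/a₂₂`, `b̃ = 2a₁₂/a₂₂` and `Ãˢ = (ã, b̃/2; b̃/2, 1)` the symmetric part of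
`Ã`, one has `θ·I₂ ≤ Ãˢ ≤ Θ·I₂` in the sense of quadratic forms, where
`θ = λ³/(Λ²(Λ+λ))` and `Θ = Λ²(Λ+λ)/λ³`. -/
theorem symmetric_part_ellipticity (lam Lam a11 a12 a22 : ℝ)
    (hlam : 0 < lam) (hlL : lam ≤ Lam)
    (hell : ∀ ξ : ℝ × ℝ,
      lam * (ξ.1 ^ 2 + ξ.2 ^ 2) ≤ a11 * ξ.1 ^ 2 + 2 * a12 * ξ.1 * ξ.2 + a22 * ξ.2 ^ 2 ∧
      a11 * ξ.1 ^ 2 + 2 * a12 * ξ.1 * ξ.2 + a22 * ξ.2 ^ 2 ≤ Lam * (ξ.1 ^ 2 + ξ.2 ^ 2)) :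
    ∀ ξ : ℝ × ℝ,
      lam ^ 3 / (Lam ^ 2 * (Lam + lam)) * (ξ.1 ^ 2 + ξ.2 ^ 2) ≤
        a11 / a22 * ξ.1 ^ 2 + 2 * a12 / a22 * ξ.1 * ξ.2 + ξ.2 ^ 2 ∧
      a11 / a22 * ξ.1 ^ 2 + 2 * a12 / a22 * ξ.1 * ξ.2 + ξ.2 ^ 2 ≤
        Lam ^ 2 * (Lam + lam) / lam ^ 3 * (ξ.1 ^ 2 + ξ.2 ^ 2) :=
  symmetric_part_ellipticity_general lam Lam a11 a12 a22 hlam hell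
end

section
/- Let 0 < λ ≤ Λ, θ = λ³/(Λ²(Λ+λ)), and let A be a 2×2 real symmetric matrix with λ|ξ|² ≤ ξᵀAξ ≤ Λ|ξ|². Then the matrix B₁ = (a₁₁/a₂₂ − θ, a₁₂/a₂₂; a₁₂/a₂₂, 1 − θ) satisfies det(B₁) ≥ θ² and Tr(B₁) ≥ 0; in particular B₁ is positive semidefinite. -/
/-!
Testing the ellipticity bounds at `e₁`, `e₂` and `(t, 1)` gives `λ ≤ a₁₁, a₂₂ ≤ Λ` and
`a₁₂² ≤ (a₁₁ - λ)(a₂₂ - λ)`, hence `det A ≥ λ²`. Clearing the denominator `a₂₂²`,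
`det B₁ - θ² = (det A - θ a₂₂ (a₁₁ + a₂₂)) / a₂₂²`, and `θ a₂₂ (a₁₁ + a₂₂) ≤ 2Λ²θ ≤ λ²`.
The trace bound follows from `θ ≤ 1/2`, and a symmetric `2 × 2` matrix with nonnegative
determinant and positive `(2,2)` entry is positive semidefinite.
-/

theorem sq_le_mul_of_forall_quadForm_nonneg {a b c : ℝ}
    (h : ∀ x y : ℝ, 0 ≤ a * x ^ 2 + 2 * b * x * y + c * y ^ 2) : b ^ 2 ≤ a * c := by
  have hdisc : discrim a (2 * b) c ≤ 0 :=
    discrim_le_zero fun x => by simpa [sq] using h x 1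
  rw [discrim] at hdisc
  linarith

theorem quadForm_nonneg_of_sq_le_mul {a b c : ℝ} (hc : 0 < c) (h : b ^ 2 ≤ a * c) (x y : ℝ) :
    0 ≤ a * x ^ 2 + 2 * b * x * y + c * y ^ 2 := by
  refine nonneg_of_mul_nonneg_right ?_ hc
  have hsq : c * (a * x ^ 2 + 2 * b * x * y + c * y ^ 2)
      = (c * y + b * x) ^ 2 + (a * c - b ^ 2) * x ^ 2 := by ring
  rw [hsq]
  have : 0 ≤ a * c - b ^ 2 := sub_nonneg.2 h
  positivity

def EllipticBounds (lam Lam a11 a12 a22 : ℝ) : Prop :=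
  ∀ ξ : ℝ × ℝ,
    lam * (ξ.1 ^ 2 + ξ.2 ^ 2) ≤ a11 * ξ.1 ^ 2 + 2 * a12 * ξ.1 * ξ.2 + a22 * ξ.2 ^ 2 ∧
    a11 * ξ.1 ^ 2 + 2 * a12 * ξ.1 * ξ.2 + a22 * ξ.2 ^ 2 ≤ Lam * (ξ.1 ^ 2 + ξ.2 ^ 2)

namespace EllipticBounds

variable {lam Lam a11 a12 a22 : ℝ} (h : EllipticBounds lam Lam a11 a12 a22)
include h

theorem le_a11 : lam ≤ a11 := by simpa using (h (1, 0)).1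

theorem a11_le : a11 ≤ Lam := by simpa using (h (1, 0)).2

theorem le_a22 : lam ≤ a22 := by simpa using (h (0, 1)).1

theorem a22_le : a22 ≤ Lam := by simpa using (h (0, 1)).2

theorem sq_le_det (hlam : 0 ≤ lam) : lam ^ 2 ≤ a11 * a22 - a12 ^ 2 := by
  have hshift : a12 ^ 2 ≤ (a11 - lam) * (a22 - lam) :=
    sq_le_mul_of_forall_quadForm_nonneg fun x y => by linarith [(h (x, y)).1]
  have htrace : lam * (2 * lam) ≤ lam * (a11 + a22) :=
    mul_le_mul_of_nonneg_left (by linarith [h.le_a11, h.le_a22]) hlam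
  linarith

theorem sq_le_det_B1 {θ : ℝ} (hlam : 0 ≤ lam) (hθ : 0 ≤ θ) (hθlam : 2 * Lam ^ 2 * θ ≤ lam ^ 2)
    (ha22 : 0 < a22) :
    θ ^ 2 ≤ (a11 / a22 - θ) * (1 - θ) - (a12 / a22) ^ 2 := by
  have hmass : θ * (a22 * (a11 + a22)) ≤ 2 * Lam ^ 2 * θ := by
    have hsize : a22 * (a11 + a22) ≤ 2 * Lam ^ 2 := by
      nlinarith [h.a11_le, h.a22_le, h.le_a11]
    linarith [mul_le_mul_of_nonneg_left hsize hθ]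
  have hdet := h.sq_le_det hlam
  have hsplit : (a11 / a22 - θ) * (1 - θ) - (a12 / a22) ^ 2 - θ ^ 2
      = (a11 * a22 - a12 ^ 2 - θ * (a22 * (a11 + a22))) / a22 ^ 2 := by
    field_simp
    ring
  rw [← sub_nonneg, hsplit]
  exact div_nonneg (by linarith) (sq_nonneg a22)

end EllipticBounds

theorem two_mul_sq_mul_theta_le {lam Lam : ℝ} (hlam : 0 < lam) (hlL : lam ≤ Lam) :
    2 * Lam ^ 2 * (lam ^ 3 / (Lam ^ 2 * (Lam + lam))) ≤ lam ^ 2 := by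
  have hLam : 0 < Lam := hlam.trans_le hlL
  rw [mul_div_assoc', div_le_iff₀ (by positivity)]
  nlinarith [mul_le_mul_of_nonneg_left hlL (by positivity : 0 ≤ lam ^ 2 * Lam ^ 2)]

/-- With `θ = λ³/(Λ²(Λ+λ))`, the matrix `B₁ = (a₁₁/a₂₂ − θ, a₁₂/a₂₂; a₁₂/a₂₂, 1 − θ)`
satisfies `det(B₁) ≥ θ²` and `Tr(B₁) ≥ 0`; in particular `B₁` is positive semidefinite. -/
theorem B1_psd (lam Lam a11 a12 a22 : ℝ)
    (hlam : 0 < lam) (hlL : lam ≤ Lam)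
    (hell : ∀ ξ : ℝ × ℝ,
      lam * (ξ.1 ^ 2 + ξ.2 ^ 2) ≤ a11 * ξ.1 ^ 2 + 2 * a12 * ξ.1 * ξ.2 + a22 * ξ.2 ^ 2 ∧
      a11 * ξ.1 ^ 2 + 2 * a12 * ξ.1 * ξ.2 + a22 * ξ.2 ^ 2 ≤ Lam * (ξ.1 ^ 2 + ξ.2 ^ 2)) :
    (a11 / a22 - lam ^ 3 / (Lam ^ 2 * (Lam + lam))) * (1 - lam ^ 3 / (Lam ^ 2 * (Lam + lam)))
        - (a12 / a22) ^ 2 ≥ (lam ^ 3 / (Lam ^ 2 * (Lam + lam))) ^ 2 ∧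
    (a11 / a22 - lam ^ 3 / (Lam ^ 2 * (Lam + lam))) + (1 - lam ^ 3 / (Lam ^ 2 * (Lam + lam))) ≥ 0 ∧
    ∀ ξ : ℝ × ℝ, 0 ≤ (a11 / a22 - lam ^ 3 / (Lam ^ 2 * (Lam + lam))) * ξ.1 ^ 2
        + 2 * (a12 / a22) * ξ.1 * ξ.2
        + (1 - lam ^ 3 / (Lam ^ 2 * (Lam + lam))) * ξ.2 ^ 2 := by
  have h : EllipticBounds lam Lam a11 a12 a22 := hell
  have hLam : 0 < Lam := hlam.trans_le hlL
  have hθlam := two_mul_sq_mul_theta_le hlam hlL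
  set θ := lam ^ 3 / (Lam ^ 2 * (Lam + lam))
  have hθ : 0 ≤ θ := by positivity
  have hθhalf : 2 * θ ≤ 1 := by
    have hsq : Lam ^ 2 * (2 * θ) ≤ Lam ^ 2 * 1 := by
      linarith [pow_le_pow_left₀ hlam.le hlL 2]
    exact le_of_mul_le_mul_left hsq (by positivity)
  have ha22 : 0 < a22 := hlam.trans_le h.le_a22
  have hratio : 0 < a11 / a22 := div_pos (hlam.trans_le h.le_a11) ha22
  have hdet := h.sq_le_det_B1 hlam.le hθ hθlam ha22
  refine ⟨hdet, by linarith, fun ξ => quadForm_nonneg_of_sq_le_mul (by linarith) ?_ ξ.1 ξ.2⟩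
  linarith [sq_nonneg θ]
end
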